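/- Let ℏ, m, g, E₀, N > 0, set κ = √(2mE₀)/ℏ, and for each n ≥ 0 define ψₙ : (ℝ³)ⁿ → ℂ by ψₙ(y₁,…,yₙ) = N (−gm)ⁿ / ((2πℏ²)ⁿ √(n!)) ∏_{j=1}^n e^{−κ|y_j|}/|y_j| (with ψ₀ = N). Then each ψₙ is square-integrable on (ℝ³)ⁿ and the total Fock-space norm is finite and given explicitly by Σ_{n=0}^∞ ∫_{(ℝ³)ⁿ} |ψₙ(y₁,…,yₙ)|² d^{3n}y = N² · exp( g² m² / (2π ℏ⁴ κ) ). -/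

import Mathlib

/-!
By Fubini, `∫ |ψₙ|² = N² cⁿ/n! · Iⁿ` with `c = (gm/(2πℏ²))²` and `I = ∫_{ℝ³} e^{-2κ|y|}/|y|² dy`.
In polar coordinates the Jacobian `r²` cancels the singularity at the origin, so
`I = 4π ∫₀^∞ e^{-2κr} dr = 2π/κ`. Hence the `n`-th sector contributes `N² aⁿ/n!` with
`a = cI = g²m²/(2πℏ⁴κ)`, and the sectors sum to the exponential series `N² eᵃ`.
-/
open Real Complex MeasureTheory

/-- The sectors of the dressed ground state of the van Hove-type IBC model:
`ψₙ(y₁,…,yₙ) = N (−gm)ⁿ/((2πℏ²)ⁿ √n!) ∏ⱼ e^{−κ|yⱼ|}/|yⱼ|`. -/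
noncomputable def dressedState (ℏ m g κ N : ℝ) (n : ℕ)
    (y : Fin n → EuclideanSpace ℝ (Fin 3)) : ℂ :=
  ((N * (-(g * m)) ^ n / ((2 * π * ℏ ^ 2) ^ n * Real.sqrt (Nat.factorial n)) *
      ∏ j, Real.exp (-(κ * ‖y j‖)) / ‖y j‖ : ℝ) : ℂ)

open Set

lemma integral_fun_norm_euclideanSpace_fin_three (f : ℝ → ℝ) :
    ∫ x : EuclideanSpace ℝ (Fin 3), f ‖x‖ = 4 * π * ∫ r in Ioi 0, r ^ 2 * f r := by
  rw [integral_fun_norm_addHaar, finrank_euclideanSpace_fin, measureReal_def,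
    EuclideanSpace.volume_ball_fin_three]
  simp only [ENNReal.ofReal_one, one_pow, one_mul,
    ENNReal.toReal_ofReal (by positivity : 0 ≤ π * 4 / 3), smul_eq_mul, nsmul_eq_mul]
  push_cast
  ring

section Yukawa

variable {κ : ℝ}

lemma sq_mul_exp_neg_mul_div_sq {r : ℝ} (hr : 0 < r) :
    r ^ 2 * (Real.exp (-(κ * r)) / r) ^ 2 = Real.exp (-(2 * κ) * r) := by
  rw [div_pow, mul_div_cancel₀ _ (by positivity), sq, ← Real.exp_add]
  ring_nf

lemma integrable_exp_neg_mul_norm_div_norm_sq (hκ : 0 < κ) :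
    Integrable fun x : EuclideanSpace ℝ (Fin 3) => (Real.exp (-(κ * ‖x‖)) / ‖x‖) ^ 2 := by
  rw [integrable_fun_norm_addHaar volume (f := fun r => (Real.exp (-(κ * r)) / r) ^ 2),
    finrank_euclideanSpace_fin]
  exact (integrableOn_exp_mul_Ioi (by linarith : -(2 * κ) < 0) 0).congr_fun
    (fun r hr => (sq_mul_exp_neg_mul_div_sq hr).symm) measurableSet_Ioi

lemma integral_exp_neg_mul_norm_div_norm_sq (hκ : 0 < κ) :
    ∫ x : EuclideanSpace ℝ (Fin 3), (Real.exp (-(κ * ‖x‖)) / ‖x‖) ^ 2 = 2 * π / κ := by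
  rw [integral_fun_norm_euclideanSpace_fin_three (fun r => (Real.exp (-(κ * r)) / r) ^ 2),
    setIntegral_congr_fun measurableSet_Ioi fun r hr => sq_mul_exp_neg_mul_div_sq hr,
    integral_exp_mul_Ioi (by linarith : -(2 * κ) < 0)]
  field_simp
  norm_num

end Yukawa

section DressedState

variable {ℏ m g κ N : ℝ}

lemma sq_norm_dressedState (n : ℕ) (y : Fin n → EuclideanSpace ℝ (Fin 3)) :
    ‖dressedState ℏ m g κ N n y‖ ^ 2 =
      N ^ 2 * ((g * m) ^ 2 / (2 * π * ℏ ^ 2) ^ 2) ^ n / n.factorial *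
        ∏ j, (Real.exp (-(κ * ‖y j‖)) / ‖y j‖) ^ 2 := by
  rw [dressedState, Complex.norm_real, Real.norm_eq_abs, sq_abs, mul_pow, ← Finset.prod_pow,
    div_pow, mul_pow _ (Real.sqrt _), Real.sq_sqrt (Nat.cast_nonneg _), mul_pow N,
    pow_right_comm _ n 2, pow_right_comm _ n 2, neg_sq, div_pow ((g * m) ^ 2)]
  simp only [mul_div_assoc, div_div]

lemma measurable_dressedState (n : ℕ) : Measurable (dressedState ℏ m g κ N n) := by
  unfold dressedState
  fun_prop

lemma memLp_dressedState (hκ : 0 < κ) (n : ℕ) :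
    MemLp (dressedState ℏ m g κ N n) 2 (volume : Measure (Fin n → EuclideanSpace ℝ (Fin 3))) := by
  rw [memLp_two_iff_integrable_sq_norm (measurable_dressedState n).aestronglyMeasurable,
    funext (sq_norm_dressedState n)]
  exact (Integrable.fintype_prod fun _ => integrable_exp_neg_mul_norm_div_norm_sq hκ).const_mul _

lemma integral_sq_norm_dressedState (hκ : 0 < κ) (n : ℕ) :
    ∫ y : Fin n → EuclideanSpace ℝ (Fin 3), ‖dressedState ℏ m g κ N n y‖ ^ 2 =
      N ^ 2 * ((g ^ 2 * m ^ 2 / (2 * π * ℏ ^ 4 * κ)) ^ n / n.factorial) := by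
  have hfactor : (g * m) ^ 2 / (2 * π * ℏ ^ 2) ^ 2 * (2 * π / κ) =
      g ^ 2 * m ^ 2 / (2 * π * ℏ ^ 4 * κ) := by
    field_simp
  simp_rw [sq_norm_dressedState n, integral_const_mul]
  rw [integral_fintype_prod_volume_eq_pow
      (fun x : EuclideanSpace ℝ (Fin 3) => (Real.exp (-(κ * ‖x‖)) / ‖x‖) ^ 2),
    integral_exp_neg_mul_norm_div_norm_sq hκ, Fintype.card_fin, ← hfactor]
  -- `ring` cannot recombine powers such as `(1/4)ⁿ * 2ⁿ` of numerals, so hide them in `c`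
  generalize (g * m) ^ 2 / (2 * π * ℏ ^ 2) ^ 2 = c
  ring

end DressedState

theorem dressedState_fock_norm
    (ℏ m g E₀ N : ℝ) (hℏ : 0 < ℏ) (hm : 0 < m) (hE₀ : 0 < E₀)
    (κ : ℝ) (hκdef : κ = Real.sqrt (2 * m * E₀) / ℏ) :
    (∀ n : ℕ, MemLp (dressedState ℏ m g κ N n) 2
        (volume : Measure (Fin n → EuclideanSpace ℝ (Fin 3)))) ∧
    ∑' n : ℕ, ∫ y : Fin n → EuclideanSpace ℝ (Fin 3), ‖dressedState ℏ m g κ N n y‖ ^ 2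
      = N ^ 2 * Real.exp (g ^ 2 * m ^ 2 / (2 * π * ℏ ^ 4 * κ)) := by
  have hκ : 0 < κ := hκdef ▸ div_pos (Real.sqrt_pos.2 (by positivity)) hℏ
  refine ⟨memLp_dressedState hκ, ?_⟩
  simp_rw [integral_sq_norm_dressedState hκ]
  rw [tsum_mul_left, Real.exp_eq_exp_ℝ, NormedSpace.exp_eq_tsum_div]
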